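/- arXiv:2003.00546 — 8 statements merged into one kernel-verified Lean document; each statement's English description precedes it below -/
import Mathlib

section
/- Let H be a complex Hilbert space, (Hᵢ)_{i∈ℕ} a sequence of complex Hilbert spaces, (Tᵢ : H → Hᵢ)_{i∈ℕ} a sequence of bounded linear operators, and B > 0. Then (Tᵢ) is a Bessel sequence of operators with bound B (i.e. Σ_{i∈ℕ} ‖Tᵢ x‖² ≤ B‖x‖² for all x ∈ H) if and only if for every x ∈ H the series Σ_{i∈ℕ} Tᵢ†(Tᵢ x) converges in H and the resulting map S : H → H, S x = Σ_{i∈ℕ} Tᵢ†(Tᵢ x), is a bounded linear operator with ‖S‖ ≤ B. -/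
/-! Bessel's inequality bounds every partial sum of the frame operator:
for `v = ∑_{i ∈ s} Tᵢ† Tᵢ x` we have `‖v‖² = ∑_{i ∈ s} ⟪Tᵢ x, Tᵢ v⟫`, and Cauchy–Schwarz together with
the Bessel bound at `v` gives `‖v‖² ≤ B ∑_{i ∈ s} ‖Tᵢ x‖²`. The Cauchy criterion then makes the series
`∑ Tᵢ† Tᵢ x` converge, and its sum has norm at most `B ‖x‖`. Conversely, pairing `S x = ∑ Tᵢ† Tᵢ x`
with `x` gives `∑ ‖Tᵢ x‖² = re ⟪x, S x⟫ ≤ ‖S‖ ‖x‖²`. -/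

open scoped ComplexInnerProductSpace
open ContinuousLinearMap Finset

theorem summable_of_norm_sum_sq_le {ι E : Type*} [NormedAddCommGroup E] [CompleteSpace E]
    {f : ι → E} {g : ι → ℝ} (hg : Summable g)
    (hfg : ∀ s : Finset ι, ‖∑ i ∈ s, f i‖ ^ 2 ≤ ∑ i ∈ s, g i) : Summable f := by
  refine summable_iff_vanishing_norm.mpr fun ε hε => ?_
  obtain ⟨s, hs⟩ := summable_iff_vanishing_norm.mp hg (ε ^ 2) (by positivity)
  refine ⟨s, fun t hts => ?_⟩
  have hsq : ‖∑ i ∈ t, f i‖ ^ 2 < ε ^ 2 :=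
    (hfg t).trans_lt ((le_abs_self _).trans_lt (hs t hts))
  simpa using abs_lt_of_sq_lt_sq hsq hε.le

theorem ContinuousLinearMap.exists_hasSum_apply_of_norm_tsum_le {𝕜 ι E F : Type*}
    [NontriviallyNormedField 𝕜] [NormedAddCommGroup E] [NormedSpace 𝕜 E]
    [NormedAddCommGroup F] [NormedSpace 𝕜 F] (A : ι → E →L[𝕜] F)
    (hA : ∀ x, Summable fun i => A i x) {C : ℝ} (hC : 0 ≤ C)
    (hbound : ∀ x, ‖∑' i, A i x‖ ≤ C * ‖x‖) :
    ∃ S : E →L[𝕜] F, (∀ x, HasSum (fun i => A i x) (S x)) ∧ ‖S‖ ≤ C := by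
  let S : E →ₗ[𝕜] F :=
    { toFun := fun x => ∑' i, A i x
      map_add' := fun x y => by simpa only [map_add] using (hA x).tsum_add (hA y)
      map_smul' := fun c x => by
        simpa only [map_smul, RingHom.id_apply] using (hA x).tsum_const_smul c }
  exact ⟨S.mkContinuous C hbound, fun x => (hA x).hasSum, S.mkContinuous_norm_le hC hbound⟩

section Bessel

variable {𝕜 ι H : Type*} [RCLike 𝕜] [NormedAddCommGroup H] [InnerProductSpace 𝕜 H]
  [CompleteSpace H] {G : ι → Type*} [∀ i, NormedAddCommGroup (G i)]
  [∀ i, InnerProductSpace 𝕜 (G i)] [∀ i, CompleteSpace (G i)] (T : ∀ i, H →L[𝕜] G i)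

theorem norm_sum_adjoint_apply_sq_le (s : Finset ι) {B : ℝ} (hB : 0 ≤ B)
    (hbessel : ∀ y, ∑ i ∈ s, ‖T i y‖ ^ 2 ≤ B * ‖y‖ ^ 2) (x : H) :
    ‖∑ i ∈ s, adjoint (T i) (T i x)‖ ^ 2 ≤ B * ∑ i ∈ s, ‖T i x‖ ^ 2 := by
  set v := ∑ i ∈ s, adjoint (T i) (T i x)
  have hv : ‖v‖ ^ 2 ≤ ∑ i ∈ s, ‖T i x‖ * ‖T i v‖ := by
    calc ‖v‖ ^ 2 = RCLike.re (inner 𝕜 v v) := (inner_self_eq_norm_sq v).symm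
      _ = ∑ i ∈ s, RCLike.re (inner 𝕜 (T i x) (T i v)) := by
        simp only [v, sum_inner, adjoint_inner_left, map_sum]
      _ ≤ ∑ i ∈ s, ‖T i x‖ * ‖T i v‖ := sum_le_sum fun i _ => re_inner_le_norm _ _
  have hv4 : (‖v‖ ^ 2) ^ 2 ≤ (B * ∑ i ∈ s, ‖T i x‖ ^ 2) * ‖v‖ ^ 2 := by
    calc (‖v‖ ^ 2) ^ 2 ≤ (∑ i ∈ s, ‖T i x‖ * ‖T i v‖) ^ 2 := by gcongr
      _ ≤ (∑ i ∈ s, ‖T i x‖ ^ 2) * ∑ i ∈ s, ‖T i v‖ ^ 2 := sum_mul_sq_le_sq_mul_sq _ _ _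
      _ ≤ (∑ i ∈ s, ‖T i x‖ ^ 2) * (B * ‖v‖ ^ 2) := by gcongr; exact hbessel v
      _ = (B * ∑ i ∈ s, ‖T i x‖ ^ 2) * ‖v‖ ^ 2 := by ring
  rcases (sq_nonneg ‖v‖).eq_or_lt with hv0 | hv0
  · rw [← hv0]
    positivity
  · exact le_of_mul_le_mul_right (by rwa [← sq]) hv0

variable {T} {B : ℝ}

theorem norm_sum_adjoint_apply_sq_le_of_bessel (hsum : ∀ x, Summable fun i => ‖T i x‖ ^ 2)
    (hbessel : ∀ x, ∑' i, ‖T i x‖ ^ 2 ≤ B * ‖x‖ ^ 2)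
    (hB : 0 ≤ B) (s : Finset ι) (x : H) :
    ‖∑ i ∈ s, adjoint (T i) (T i x)‖ ^ 2 ≤ B * ∑ i ∈ s, ‖T i x‖ ^ 2 :=
  norm_sum_adjoint_apply_sq_le T s hB
    (fun y => ((hsum y).sum_le_tsum s fun _ _ => by positivity).trans (hbessel y)) x

theorem summable_adjoint_apply_of_bessel (hsum : ∀ x, Summable fun i => ‖T i x‖ ^ 2)
    (hbessel : ∀ x, ∑' i, ‖T i x‖ ^ 2 ≤ B * ‖x‖ ^ 2)
    (hB : 0 ≤ B) (x : H) :
    Summable fun i => adjoint (T i) (T i x) :=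
  summable_of_norm_sum_sq_le ((hsum x).mul_left B) fun s => by
    simpa only [mul_sum] using norm_sum_adjoint_apply_sq_le_of_bessel hsum hbessel hB s x

theorem norm_tsum_adjoint_apply_le_of_bessel (hsum : ∀ x, Summable fun i => ‖T i x‖ ^ 2)
    (hbessel : ∀ x, ∑' i, ‖T i x‖ ^ 2 ≤ B * ‖x‖ ^ 2)
    (hB : 0 ≤ B) (x : H) :
    ‖∑' i, adjoint (T i) (T i x)‖ ≤ B * ‖x‖ := by
  have hlim : ‖∑' i, adjoint (T i) (T i x)‖ ^ 2 ≤ B * ∑' i, ‖T i x‖ ^ 2 :=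
    le_of_tendsto_of_tendsto'
      (((summable_adjoint_apply_of_bessel hsum hbessel hB x).hasSum.norm).pow 2)
      (((hsum x).hasSum).const_mul B) (norm_sum_adjoint_apply_sq_le_of_bessel hsum hbessel hB · x)
  refine le_of_pow_le_pow_left₀ two_ne_zero (by positivity) ?_
  calc ‖∑' i, adjoint (T i) (T i x)‖ ^ 2 ≤ B * (B * ‖x‖ ^ 2) :=
        hlim.trans (mul_le_mul_of_nonneg_left (hbessel x) hB)
    _ = (B * ‖x‖) ^ 2 := by ring

theorem hasSum_norm_sq_of_hasSum_adjoint_apply {x y : H}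
    (h : HasSum (fun i => adjoint (T i) (T i x)) y) :
    HasSum (fun i => ‖T i x‖ ^ 2) (RCLike.re (inner 𝕜 x y)) := by
  have := RCLike.reCLM.hasSum ((innerSL 𝕜 x).hasSum h)
  simpa only [innerSL_apply_apply, adjoint_inner_right, RCLike.reCLM_apply,
    inner_self_eq_norm_sq] using this

end Bessel

/-- A sequence of bounded operators `Tᵢ : H → Hᵢ` is a Bessel sequence of operators with bound
`B` iff `x ↦ Σᵢ Tᵢ† (Tᵢ x)` is a well-defined bounded operator `S` on `H` with `‖S‖ ≤ B`. -/
theorem bessel_iff_frame_operator_bounded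
    {H : Type*} [NormedAddCommGroup H] [InnerProductSpace ℂ H] [CompleteSpace H]
    (G : ℕ → Type*) [∀ i, NormedAddCommGroup (G i)] [∀ i, InnerProductSpace ℂ (G i)]
    [∀ i, CompleteSpace (G i)]
    (T : ∀ i, H →L[ℂ] G i) (B : ℝ) (hB : 0 < B) :
    ((∀ x : H, Summable fun i => ‖T i x‖ ^ 2) ∧
      ∀ x : H, ∑' i, ‖T i x‖ ^ 2 ≤ B * ‖x‖ ^ 2) ↔
    ∃ S : H →L[ℂ] H,
      (∀ x : H, HasSum (fun i => ContinuousLinearMap.adjoint (T i) (T i x)) (S x)) ∧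
      ‖S‖ ≤ B := by
  constructor
  · rintro ⟨hsum, hbessel⟩
    have hsummable := summable_adjoint_apply_of_bessel hsum hbessel hB.le
    have hbound := norm_tsum_adjoint_apply_le_of_bessel hsum hbessel hB.le
    exact exists_hasSum_apply_of_norm_tsum_le (fun i => adjoint (T i) ∘L T i) hsummable hB.le
      hbound
  · rintro ⟨S, hS, hSB⟩
    have hre x := hasSum_norm_sq_of_hasSum_adjoint_apply (hS x)
    refine ⟨fun x => (hre x).summable, fun x => ?_⟩
    calc ∑' i, ‖T i x‖ ^ 2 = RCLike.re ⟪x, S x⟫ := (hre x).tsum_eq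
      _ ≤ ‖x‖ * ‖S x‖ := re_inner_le_norm _ _
      _ ≤ ‖x‖ * (B * ‖x‖) := by gcongr; exact S.le_of_opNorm_le hSB x
      _ = B * ‖x‖ ^ 2 := by ring
end

section
/- Let H be a complex Hilbert space, (Hᵢ)_{i∈ℕ} a sequence of complex Hilbert spaces, (Tᵢ : H → Hᵢ)_{i∈ℕ} a sequence of bounded linear operators, and for each i let (e_{i,k})_{k∈ℕ} be a Hilbert (orthonormal) basis of Hᵢ. Put x_{i,k} := Tᵢ†(e_{i,k}) ∈ H. Then, for constants 0 < r₁ ≤ r₂ < ∞, (Tᵢ) is a frame of operators for H with bounds r₁, r₂ if and only if the doubly indexed family (x_{i,k})_{(i,k)∈ℕ×ℕ} is a frame for H with bounds r₁, r₂, i.e. r₁‖x‖² ≤ Σ_{i,k} |⟨x_{i,k}, x⟩|² ≤ r₂‖x‖² for all x ∈ H. -/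
/-! Since `⟪Tᵢ† e_{i,k}, x⟫ = ⟪e_{i,k}, Tᵢ x⟫`, Parseval's identity in each `Gᵢ` turns the
inner sum over `k` into `‖Tᵢ x‖²`, so the two frame sums agree for every `x`. -/

open scoped ComplexInnerProductSpace InnerProductSpace

theorem HilbertBasis.hasSum_norm_inner_sq {ι 𝕜 E : Type*} [RCLike 𝕜] [NormedAddCommGroup E]
    [InnerProductSpace 𝕜 E] (b : HilbertBasis ι 𝕜 E) (x : E) :
    HasSum (fun i ↦ ‖⟪b i, x⟫_𝕜‖ ^ 2) (‖x‖ ^ 2) := by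
  simpa [b.repr_apply_apply, b.repr.norm_map] using
    lp.hasSum_norm (p := 2) (by norm_num) (b.repr x)

theorem tsum_prod_of_nonneg {α β : Type*} {f : α × β → ℝ} (hf : 0 ≤ f)
    (hfib : ∀ a, Summable fun b ↦ f (a, b)) : ∑' p, f p = ∑' a, ∑' b, f (a, b) := by
  by_cases hs : Summable f
  · exact hs.tsum_prod' hfib
  · have hs' : ¬Summable fun a ↦ ∑' b, f (a, b) := fun h ↦
      hs ((summable_prod_of_nonneg hf).2 ⟨hfib, h⟩)
    rw [tsum_eq_zero_of_not_summable hs, tsum_eq_zero_of_not_summable hs']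

theorem tsum_norm_inner_adjoint_hilbertBasis_sq {ι κ 𝕜 H : Type*} [RCLike 𝕜]
    [NormedAddCommGroup H] [InnerProductSpace 𝕜 H] [CompleteSpace H] {G : ι → Type*}
    [∀ i, NormedAddCommGroup (G i)] [∀ i, InnerProductSpace 𝕜 (G i)] [∀ i, CompleteSpace (G i)]
    (T : ∀ i, H →L[𝕜] G i) (e : ∀ i, HilbertBasis κ 𝕜 (G i)) (x : H) :
    ∑' p : ι × κ, ‖⟪ContinuousLinearMap.adjoint (T p.1) (e p.1 p.2), x⟫_𝕜‖ ^ 2 =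
      ∑' i, ‖T i x‖ ^ 2 := by
  have parseval i := (e i).hasSum_norm_inner_sq (T i x)
  simp only [ContinuousLinearMap.adjoint_inner_left]
  rw [tsum_prod_of_nonneg (f := fun p : ι × κ ↦ ‖⟪e p.1 p.2, T p.1 x⟫_𝕜‖ ^ 2)
    (fun _ ↦ by positivity) fun i ↦ (parseval i).summable]
  exact tsum_congr fun i ↦ (parseval i).tsum_eq

theorem frame_of_operators_iff_induced_frame_general
    {H : Type*} [NormedAddCommGroup H] [InnerProductSpace ℂ H] [CompleteSpace H]
    (G : ℕ → Type*) [∀ i, NormedAddCommGroup (G i)] [∀ i, InnerProductSpace ℂ (G i)]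
    [∀ i, CompleteSpace (G i)]
    (T : ∀ i, H →L[ℂ] G i) (e : ∀ i, HilbertBasis ℕ ℂ (G i))
    (r₁ r₂ : ℝ) :
    (∀ x : H,
        r₁ * ‖x‖ ^ 2 ≤ ∑' i, ‖T i x‖ ^ 2 ∧ ∑' i, ‖T i x‖ ^ 2 ≤ r₂ * ‖x‖ ^ 2) ↔
    (∀ x : H,
        r₁ * ‖x‖ ^ 2 ≤
            ∑' p : ℕ × ℕ, ‖⟪ContinuousLinearMap.adjoint (T p.1) (e p.1 p.2), x⟫‖ ^ 2 ∧
          ∑' p : ℕ × ℕ, ‖⟪ContinuousLinearMap.adjoint (T p.1) (e p.1 p.2), x⟫‖ ^ 2 ≤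
            r₂ * ‖x‖ ^ 2) := by
  simp only [tsum_norm_inner_adjoint_hilbertBasis_sq]

/-- `(Tᵢ)` is a frame of operators for `H` with bounds `r₁, r₂` iff the induced sequence
`x_{i,k} = Tᵢ†(e_{i,k})` is a frame for `H` with the same bounds. -/
theorem frame_of_operators_iff_induced_frame
    {H : Type*} [NormedAddCommGroup H] [InnerProductSpace ℂ H] [CompleteSpace H]
    (G : ℕ → Type*) [∀ i, NormedAddCommGroup (G i)] [∀ i, InnerProductSpace ℂ (G i)]
    [∀ i, CompleteSpace (G i)]
    (T : ∀ i, H →L[ℂ] G i) (e : ∀ i, HilbertBasis ℕ ℂ (G i))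
    (r₁ r₂ : ℝ) (hr₁ : 0 < r₁) (hr₁₂ : r₁ ≤ r₂) :
    (∀ x : H,
        r₁ * ‖x‖ ^ 2 ≤ ∑' i, ‖T i x‖ ^ 2 ∧ ∑' i, ‖T i x‖ ^ 2 ≤ r₂ * ‖x‖ ^ 2) ↔
    (∀ x : H,
        r₁ * ‖x‖ ^ 2 ≤
            ∑' p : ℕ × ℕ, ‖⟪ContinuousLinearMap.adjoint (T p.1) (e p.1 p.2), x⟫‖ ^ 2 ∧
          ∑' p : ℕ × ℕ, ‖⟪ContinuousLinearMap.adjoint (T p.1) (e p.1 p.2), x⟫‖ ^ 2 ≤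
            r₂ * ‖x‖ ^ 2) :=
  frame_of_operators_iff_induced_frame_general G T e r₁ r₂
end

section
/- Let H be a complex Hilbert space, (Hᵢ)_{i∈ℕ} a sequence of complex Hilbert spaces, (Tᵢ : H → Hᵢ)_{i∈ℕ} a frame of operators for H with bounds r₁, r₂, and for each i let (e_{i,k})_{k∈ℕ} be a Hilbert (orthonormal) basis of Hᵢ; put x_{i,k} := Tᵢ†(e_{i,k}). Then the frame operator of (Tᵢ) coincides with the frame operator of the induced frame (x_{i,k}): for every x ∈ H, Σ_{i∈ℕ} Tᵢ†(Tᵢ x) = Σ_{i,k∈ℕ} ⟨x_{i,k}, x⟩ x_{i,k} (both series converge in H). -/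
/-!
Parseval's identity in each `Hᵢ` gives `∑ₖ |⟪x_{i,k}, v⟫|² = ‖Tᵢ v‖²`, so the upper frame bound
makes `(x_{i,k})` a Bessel family with bound `r₂`, while the lower bound forces `∑ᵢ ‖Tᵢ v‖²` to
converge. By Cauchy–Schwarz the synthesis sums of a Bessel family satisfy
`‖∑ c_p x_p‖² ≤ r₂ ∑ |c_p|²`, so `∑ ⟪x_p, x⟫ x_p` converges unconditionally over `ℕ × ℕ`.
Summing it fibre by fibre, the `i`-th fibre is `Tᵢ†` applied to the basis expansion of `Tᵢ x`.
-/

open scoped InnerProductSpace ComplexInnerProductSpace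

theorem hasSum_prod_of_nonneg {α β : Type*} {f : α × β → ℝ} (hf : 0 ≤ f) {g : α → ℝ} {s : ℝ}
    (hfib : ∀ a, HasSum (fun b => f (a, b)) (g a)) (hg : HasSum g s) : HasSum f s := by
  have hf_summable : Summable f := (summable_prod_of_nonneg hf).2
    ⟨fun a => (hfib a).summable, by simpa only [(hfib _).tsum_eq] using hg.summable⟩
  convert hf_summable.hasSum
  exact hg.unique (hf_summable.hasSum.prod_fiberwise hfib)

section Bessel

variable {𝕜 E ι : Type*} [RCLike 𝕜] [NormedAddCommGroup E] [InnerProductSpace 𝕜 E]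

theorem norm_sum_smul_sq_le_of_bessel {X : ι → E} {B : ℝ} (hB : 0 ≤ B)
    (hX : ∀ (v : E) (t : Finset ι), ∑ p ∈ t, ‖⟪X p, v⟫_𝕜‖ ^ 2 ≤ B * ‖v‖ ^ 2)
    (c : ι → 𝕜) (t : Finset ι) :
    ‖∑ p ∈ t, c p • X p‖ ^ 2 ≤ B * ∑ p ∈ t, ‖c p‖ ^ 2 := by
  set v := ∑ p ∈ t, c p • X p with hv
  have hv_le : ‖v‖ ^ 2 ≤ ∑ p ∈ t, ‖c p‖ * ‖⟪X p, v⟫_𝕜‖ :=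
    calc ‖v‖ ^ 2 = RCLike.re ⟪v, v⟫_𝕜 := (inner_self_eq_norm_sq v).symm
      _ ≤ ‖⟪v, v⟫_𝕜‖ := RCLike.re_le_norm _
      _ = ‖∑ p ∈ t, c p * ⟪v, X p⟫_𝕜‖ := by
          nth_rw 2 [hv]
          simp only [inner_sum, inner_smul_right]
      _ ≤ ∑ p ∈ t, ‖c p‖ * ‖⟪X p, v⟫_𝕜‖ := by
          refine (norm_sum_le _ _).trans_eq ?_
          simp only [norm_mul, norm_inner_symm]
  have hv_sq_le : ‖v‖ ^ 2 * ‖v‖ ^ 2 ≤ B * (∑ p ∈ t, ‖c p‖ ^ 2) * ‖v‖ ^ 2 :=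
    calc ‖v‖ ^ 2 * ‖v‖ ^ 2 ≤ (∑ p ∈ t, ‖c p‖ * ‖⟪X p, v⟫_𝕜‖) ^ 2 := by
          rw [← sq]; gcongr
      _ ≤ (∑ p ∈ t, ‖c p‖ ^ 2) * ∑ p ∈ t, ‖⟪X p, v⟫_𝕜‖ ^ 2 :=
          Finset.sum_mul_sq_le_sq_mul_sq _ _ _
      _ ≤ (∑ p ∈ t, ‖c p‖ ^ 2) * (B * ‖v‖ ^ 2) := by gcongr; exact hX v t
      _ = B * (∑ p ∈ t, ‖c p‖ ^ 2) * ‖v‖ ^ 2 := by ring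
  rcases (sq_nonneg ‖v‖).eq_or_lt with hv0 | hv0
  · rw [← hv0]; positivity
  · exact le_of_mul_le_mul_right hv_sq_le hv0

theorem summable_smul_of_bessel [CompleteSpace E] {X : ι → E} {B : ℝ} (hB : 0 ≤ B)
    (hX : ∀ (v : E) (t : Finset ι), ∑ p ∈ t, ‖⟪X p, v⟫_𝕜‖ ^ 2 ≤ B * ‖v‖ ^ 2)
    {c : ι → 𝕜} (hc : Summable fun p => ‖c p‖ ^ 2) :
    Summable fun p => c p • X p := by
  rw [summable_iff_vanishing_norm]
  intro ε hε
  obtain ⟨s, hs⟩ := summable_iff_vanishing_norm.1 hc (ε ^ 2 / (B + 1)) (by positivity)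
  refine ⟨s, fun t ht => lt_of_pow_lt_pow_left₀ 2 hε.le ?_⟩
  have hc_small : ∑ p ∈ t, ‖c p‖ ^ 2 < ε ^ 2 / (B + 1) := (le_abs_self _).trans_lt (hs t ht)
  calc ‖∑ p ∈ t, c p • X p‖ ^ 2 ≤ B * ∑ p ∈ t, ‖c p‖ ^ 2 :=
        norm_sum_smul_sq_le_of_bessel hB hX c t
    _ ≤ (B + 1) * ∑ p ∈ t, ‖c p‖ ^ 2 := by gcongr; linarith
    _ < (B + 1) * (ε ^ 2 / (B + 1)) := by gcongr
    _ = ε ^ 2 := by field_simp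

end Bessel

namespace HilbertBasis

variable {𝕜 E F κ : Type*} [RCLike 𝕜] [NormedAddCommGroup E] [InnerProductSpace 𝕜 E]
  [NormedAddCommGroup F] [InnerProductSpace 𝕜 F]

theorem hasSum_norm_inner_sq_s2 (b : HilbertBasis κ 𝕜 F) (y : F) :
    HasSum (fun k => ‖⟪b k, y⟫_𝕜‖ ^ 2) (‖y‖ ^ 2) := by
  simpa [b.repr_apply_apply] using lp.hasSum_norm (p := 2) (by norm_num) (b.repr y)

theorem hasSum_inner_adjoint_smul_adjoint [CompleteSpace E] [CompleteSpace F]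
    (b : HilbertBasis κ 𝕜 F) (A : E →L[𝕜] F) (x : E) :
    HasSum (fun k => ⟪A.adjoint (b k), x⟫_𝕜 • A.adjoint (b k)) (A.adjoint (A x)) := by
  simpa only [map_smul, b.repr_apply_apply, ContinuousLinearMap.adjoint_inner_left]
    using (b.hasSum_repr (A x)).mapL A.adjoint

end HilbertBasis

section FrameOfOperators

variable {𝕜 E ι κ : Type*} [RCLike 𝕜] [NormedAddCommGroup E] [InnerProductSpace 𝕜 E]
  [CompleteSpace E] {G : ι → Type*} [∀ i, NormedAddCommGroup (G i)]
  [∀ i, InnerProductSpace 𝕜 (G i)] [∀ i, CompleteSpace (G i)]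

noncomputable def inducedFrame (T : ∀ i, E →L[𝕜] G i) (e : ∀ i, HilbertBasis κ 𝕜 (G i)) (p : ι × κ) : E :=
  (T p.1).adjoint (e p.1 p.2)

theorem hasSum_norm_inner_inducedFrame_sq (T : ∀ i, E →L[𝕜] G i)
    (e : ∀ i, HilbertBasis κ 𝕜 (G i)) {v : E} (hv : Summable fun i => ‖T i v‖ ^ 2) :
    HasSum (fun p => ‖⟪inducedFrame T e p, v⟫_𝕜‖ ^ 2) (∑' i, ‖T i v‖ ^ 2) :=
  hasSum_prod_of_nonneg (fun _ => by positivity)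
    (fun i => by
      simpa only [inducedFrame, ContinuousLinearMap.adjoint_inner_left]
        using (e i).hasSum_norm_inner_sq_s2 (T i v))
    hv.hasSum

end FrameOfOperators

/-- The frame operator of a frame of operators `(Tᵢ)` coincides with the frame operator of the
induced frame `(x_{i,k}) = (Tᵢ†(e_{i,k}))`. -/
theorem frame_operator_eq_induced_frame_operator
    {H : Type*} [NormedAddCommGroup H] [InnerProductSpace ℂ H] [CompleteSpace H]
    (G : ℕ → Type*) [∀ i, NormedAddCommGroup (G i)] [∀ i, InnerProductSpace ℂ (G i)]
    [∀ i, CompleteSpace (G i)]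
    (T : ∀ i, H →L[ℂ] G i) (e : ∀ i, HilbertBasis ℕ ℂ (G i))
    (r₁ r₂ : ℝ) (hr₁ : 0 < r₁) (hr₁₂ : r₁ ≤ r₂)
    (hframe : ∀ x : H,
        r₁ * ‖x‖ ^ 2 ≤ ∑' i, ‖T i x‖ ^ 2 ∧ ∑' i, ‖T i x‖ ^ 2 ≤ r₂ * ‖x‖ ^ 2) :
    ∀ x : H, ∃ y : H,
      HasSum (fun i => ContinuousLinearMap.adjoint (T i) (T i x)) y ∧
      HasSum
        (fun p : ℕ × ℕ =>
          ⟪ContinuousLinearMap.adjoint (T p.1) (e p.1 p.2), x⟫ •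
            ContinuousLinearMap.adjoint (T p.1) (e p.1 p.2))
        y := by
  intro x
  -- a non-summable series has `tsum = 0`, which the lower frame bound only allows at `v = 0`
  have hsummable : ∀ v : H, Summable fun i => ‖T i v‖ ^ 2 := by
    intro v
    by_contra h
    have hv : v = 0 := by
      by_contra hv
      have hlower := (hframe v).1
      rw [tsum_eq_zero_of_not_summable h] at hlower
      linarith [mul_pos hr₁ (pow_pos (norm_pos_iff.2 hv) 2)]
    exact h (by simp [hv])
  have hbessel : ∀ (v : H) (t : Finset (ℕ × ℕ)),
      ∑ p ∈ t, ‖⟪inducedFrame T e p, v⟫‖ ^ 2 ≤ r₂ * ‖v‖ ^ 2 := fun v t =>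
    (sum_le_hasSum t (fun _ _ => by positivity)
      (hasSum_norm_inner_inducedFrame_sq T e (hsummable v))).trans (hframe v).2
  have hinduced : Summable fun p => ⟪inducedFrame T e p, x⟫ • inducedFrame T e p :=
    summable_smul_of_bessel (hr₁.le.trans hr₁₂) hbessel
      (hasSum_norm_inner_inducedFrame_sq T e (hsummable x)).summable
  exact ⟨_, hinduced.hasSum.prod_fiberwise fun i =>
    (e i).hasSum_inner_adjoint_smul_adjoint (T i) x, hinduced.hasSum⟩
end

section
/- Let H be a complex Hilbert space, (Hᵢ)_{i∈ℕ} a sequence of complex Hilbert spaces, and (Tᵢ : H → Hᵢ)_{i∈ℕ} a frame of operators for H with bounds r₁, r₂. Then the frame operator S satisfies ‖I − r₂⁻¹ S‖ ≤ (r₂ − r₁)/r₂ < 1; consequently S is invertible as a bounded operator on H (S is bijective and has a bounded inverse). -/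
/-!
The quadratic form of the frame operator is `x ↦ ∑ ‖Tᵢ x‖²`, so the frame bounds say
`r₁ ≤ S ≤ r₂`. Hence the self-adjoint operator `I - r₂⁻¹ S` has quadratic form between `0` and
`(1 - r₁ / r₂) ‖x‖²`, and the norm of a self-adjoint operator is the supremum of its Rayleigh
quotient in absolute value. Since `1 - r₁ / r₂ < 1`, the Neumann series inverts `r₂⁻¹ S`.
-/

section FrameOperator

open scoped InnerProductSpace
open RCLike ContinuousLinearMap ComplexConjugate

namespace ContinuousLinearMap

variable {𝕜 E : Type*} [RCLike 𝕜] [NormedAddCommGroup E] [InnerProductSpace 𝕜 E]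

theorem norm_le_of_isSymmetric_of_abs_re_inner_le {A : E →L[𝕜] E}
    (hA : (A : E →ₗ[𝕜] E).IsSymmetric) {c : ℝ} (hc : 0 ≤ c)
    (hbound : ∀ x, |re ⟪A x, x⟫_𝕜| ≤ c * ‖x‖ ^ 2) : ‖A‖ ≤ c := by
  rw [norm_eq_iSup_rayleighQuotient A hA]
  refine ciSup_le fun x => ?_
  rw [rayleighQuotient, reApplyInnerSelf_apply, abs_div, abs_sq]
  rcases eq_or_ne x 0 with rfl | hx
  · simpa using hc
  · exact div_le_of_le_mul₀ (sq_nonneg _) hc (hbound x)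

theorem norm_one_sub_inv_smul_le {S : E →L[𝕜] E} (hS : (S : E →ₗ[𝕜] E).IsSymmetric)
    {r₁ r₂ : ℝ} (hr₂ : 0 < r₂) (hr₁₂ : r₁ ≤ r₂)
    (hbounds : ∀ x, r₁ * ‖x‖ ^ 2 ≤ re ⟪S x, x⟫_𝕜 ∧ re ⟪S x, x⟫_𝕜 ≤ r₂ * ‖x‖ ^ 2) :
    ‖1 - ((r₂⁻¹ : ℝ) : 𝕜) • S‖ ≤ (r₂ - r₁) / r₂ := by
  refine norm_le_of_isSymmetric_of_abs_re_inner_le ?_ (div_nonneg (by linarith) hr₂.le) ?_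
  · exact LinearMap.IsSymmetric.id.sub (hS.smul (conj_ofReal _))
  · intro x
    have hform : re ⟪(1 - ((r₂⁻¹ : ℝ) : 𝕜) • S) x, x⟫_𝕜 =
        (r₂ * ‖x‖ ^ 2 - re ⟪S x, x⟫_𝕜) / r₂ := by
      simp only [sub_apply, one_apply_eq_self, smul_apply, inner_sub_left, inner_smul_left,
        conj_ofReal, map_sub, re_ofReal_mul, inner_self_eq_norm_sq]
      field_simp
    obtain ⟨hlow, hup⟩ := hbounds x
    rw [hform, abs_div, abs_of_pos hr₂, abs_of_nonneg (by linarith), div_mul_eq_mul_div]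
    gcongr
    linarith

end ContinuousLinearMap

variable {𝕜 E ι : Type*} [RCLike 𝕜] [NormedAddCommGroup E] [InnerProductSpace 𝕜 E] [CompleteSpace E]
  {F : ι → Type*} [∀ i, NormedAddCommGroup (F i)] [∀ i, InnerProductSpace 𝕜 (F i)]
  [∀ i, CompleteSpace (F i)]

def IsFrameOperator (T : ∀ i, E →L[𝕜] F i) (S : E →L[𝕜] E) : Prop :=
  ∀ x, HasSum (fun i => adjoint (T i) (T i x)) (S x)

namespace IsFrameOperator

variable {T : ∀ i, E →L[𝕜] F i} {S : E →L[𝕜] E}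

theorem hasSum_inner (hS : IsFrameOperator T S) (x y : E) :
    HasSum (fun i => ⟪T i x, T i y⟫_𝕜) ⟪x, S y⟫_𝕜 := by
  simpa only [innerSL_apply_apply, adjoint_inner_right] using (hS y).mapL (innerSL 𝕜 x)

theorem isSymmetric (hS : IsFrameOperator T S) : (S : E →ₗ[𝕜] E).IsSymmetric := by
  intro x y
  have hconj : HasSum (fun i => ⟪T i x, T i y⟫_𝕜) (conj ⟪y, S x⟫_𝕜) := by
    refine (hasSum_conj 𝕜).mp ?_
    simpa only [inner_conj_symm] using hS.hasSum_inner y x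
  exact (inner_conj_symm _ _).symm.trans (hconj.unique (hS.hasSum_inner x y))

theorem hasSum_norm_sq (hS : IsFrameOperator T S) (x : E) :
    HasSum (fun i => ‖T i x‖ ^ 2) (re ⟪S x, x⟫_𝕜) := by
  rw [inner_re_symm]
  simpa only [reCLM_apply, inner_self_eq_norm_sq] using (hS.hasSum_inner x x).mapL reCLM

end IsFrameOperator

end FrameOperator

/-- The frame operator `S` of a frame of operators with bounds `r₁, r₂` satisfies
`‖I - r₂⁻¹ S‖ ≤ (r₂ - r₁)/r₂ < 1`; consequently `S` is invertible as a bounded operator. -/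
theorem frame_operator_invertible
    {H : Type*} [NormedAddCommGroup H] [InnerProductSpace ℂ H] [CompleteSpace H]
    (G : ℕ → Type*) [∀ i, NormedAddCommGroup (G i)] [∀ i, InnerProductSpace ℂ (G i)]
    [∀ i, CompleteSpace (G i)]
    (T : ∀ i, H →L[ℂ] G i)
    (r₁ r₂ : ℝ) (hr₁ : 0 < r₁) (hr₁₂ : r₁ ≤ r₂)
    (hframe : ∀ x : H,
        r₁ * ‖x‖ ^ 2 ≤ ∑' i, ‖T i x‖ ^ 2 ∧ ∑' i, ‖T i x‖ ^ 2 ≤ r₂ * ‖x‖ ^ 2)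
    (S : H →L[ℂ] H)
    (hS : ∀ x : H, HasSum (fun i => ContinuousLinearMap.adjoint (T i) (T i x)) (S x)) :
    ‖(1 : H →L[ℂ] H) - r₂⁻¹ • S‖ ≤ (r₂ - r₁) / r₂ ∧ (r₂ - r₁) / r₂ < 1 ∧ IsUnit S := by
  have hS : IsFrameOperator T S := hS
  have hr₂ : 0 < r₂ := hr₁.trans_le hr₁₂
  have hnorm : ‖1 - r₂⁻¹ • S‖ ≤ (r₂ - r₁) / r₂ := by
    rw [← Complex.coe_smul]
    refine ContinuousLinearMap.norm_one_sub_inv_smul_le hS.isSymmetric hr₂ hr₁₂ fun x => ?_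
    rw [← (hS.hasSum_norm_sq x).tsum_eq]
    exact hframe x
  have hlt : (r₂ - r₁) / r₂ < 1 := by
    rw [div_lt_one hr₂]
    linarith
  refine ⟨hnorm, hlt, ?_⟩
  have hunit := isUnit_one_sub_of_norm_lt_one (hnorm.trans_lt hlt)
  rw [sub_sub_cancel] at hunit
  exact (isUnit_smul_iff (Units.mk0 r₂⁻¹ (inv_ne_zero hr₂.ne')) S).mp hunit
end

section
/- Let H be a complex Hilbert space, (Hᵢ)_{i∈ℕ} a sequence of complex Hilbert spaces, and (Tᵢ : H → Hᵢ)_{i∈ℕ} a frame of operators for H with bounds r₁, r₂, with invertible frame operator S. Then the frame operator of the dual frame of operators (Uᵢ = Tᵢ ∘ S⁻¹)_{i∈ℕ} is S⁻¹: for every x ∈ H, Σ_{i∈ℕ} Uᵢ†(Uᵢ x) = S⁻¹ x. -/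
/-!
Since `⟪S x, y⟫ = Σᵢ ⟪Tᵢ x, Tᵢ y⟫`, the frame operator `S` is self-adjoint, hence so is its right
inverse. The frame operator of `(Tᵢ ∘ A)` is `A† S A`; for `A = S⁻¹` this is `S⁻¹ S S⁻¹ = S⁻¹`.
-/

open ContinuousLinearMap

theorem IsSelfAdjoint.of_mul_eq_one_right {M : Type*} [Monoid M] [StarMul M] {a b : M}
    (ha : IsSelfAdjoint a) (h : a * b = 1) : IsSelfAdjoint b :=
  left_inv_eq_right_inv (by rw [← ha.star_eq, ← star_mul, h, star_one]) h

section FrameOperator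

variable {𝕜 ι E : Type*} {F : ι → Type*} [RCLike 𝕜]
  [NormedAddCommGroup E] [InnerProductSpace 𝕜 E] [CompleteSpace E]
  [∀ i, NormedAddCommGroup (F i)] [∀ i, InnerProductSpace 𝕜 (F i)] [∀ i, CompleteSpace (F i)]
  {T : ∀ i, E →L[𝕜] F i} {S : E →L[𝕜] E}

theorem hasSum_inner_apply_apply (hS : ∀ x, HasSum (fun i => adjoint (T i) (T i x)) (S x))
    (x y : E) :
    HasSum (fun i => inner 𝕜 (T i x) (T i y)) (inner 𝕜 x (S y)) := by
  simpa only [innerSL_apply_apply, adjoint_inner_right] using (hS y).mapL (innerSL 𝕜 x)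

theorem isSelfAdjoint_of_hasSum_adjoint_apply
    (hS : ∀ x, HasSum (fun i => adjoint (T i) (T i x)) (S x)) : IsSelfAdjoint S := by
  refine isSelfAdjoint_iff_isSymmetric.mpr fun x y => ?_
  have hconj := (hasSum_inner_apply_apply hS y x).map (starRingEnd 𝕜) continuous_star
  simp only [Function.comp_def, inner_conj_symm] at hconj
  exact hconj.unique (hasSum_inner_apply_apply hS x y)

theorem hasSum_adjoint_comp_apply {E' : Type*} [NormedAddCommGroup E'] [InnerProductSpace 𝕜 E']
    [CompleteSpace E'] (hS : ∀ x, HasSum (fun i => adjoint (T i) (T i x)) (S x)) (A : E' →L[𝕜] E)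
    (x : E') :
    HasSum (fun i => adjoint ((T i).comp A) ((T i).comp A x)) (adjoint A (S (A x))) := by
  simpa only [adjoint_comp, comp_apply] using (hS (A x)).mapL (adjoint A)

end FrameOperator

theorem dual_frame_operator_eq_inv_general
    {H : Type*} [NormedAddCommGroup H] [InnerProductSpace ℂ H] [CompleteSpace H]
    (G : ℕ → Type*) [∀ i, NormedAddCommGroup (G i)] [∀ i, InnerProductSpace ℂ (G i)]
    [∀ i, CompleteSpace (G i)]
    (T : ∀ i, H →L[ℂ] G i)
    (S Sinv : H →L[ℂ] H)
    (hS : ∀ x : H, HasSum (fun i => ContinuousLinearMap.adjoint (T i) (T i x)) (S x))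
    (hSinv₁ : S.comp Sinv = 1) :
    ∀ x : H,
      HasSum
        (fun i =>
          ContinuousLinearMap.adjoint ((T i).comp Sinv) ((T i).comp Sinv x))
        (Sinv x) := by
  intro x
  have hSinv : adjoint Sinv = Sinv := isSelfAdjoint_iff'.mp <|
    (isSelfAdjoint_of_hasSum_adjoint_apply hS).of_mul_eq_one_right hSinv₁
  have hSSinv : S (Sinv x) = x := by simpa using congr($hSinv₁ x)
  simpa only [hSinv, hSSinv] using hasSum_adjoint_comp_apply hS Sinv x

/-- The frame operator of the dual frame of operators `(Uᵢ = Tᵢ ∘ S⁻¹)` is `S⁻¹`: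
for every `x`, `Σᵢ Uᵢ†(Uᵢ x) = S⁻¹ x`. -/
theorem dual_frame_operator_eq_inv
    {H : Type*} [NormedAddCommGroup H] [InnerProductSpace ℂ H] [CompleteSpace H]
    (G : ℕ → Type*) [∀ i, NormedAddCommGroup (G i)] [∀ i, InnerProductSpace ℂ (G i)]
    [∀ i, CompleteSpace (G i)]
    (T : ∀ i, H →L[ℂ] G i)
    (r₁ r₂ : ℝ) (hr₁ : 0 < r₁) (hr₁₂ : r₁ ≤ r₂)
    (hframe : ∀ x : H,
        r₁ * ‖x‖ ^ 2 ≤ ∑' i, ‖T i x‖ ^ 2 ∧ ∑' i, ‖T i x‖ ^ 2 ≤ r₂ * ‖x‖ ^ 2)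
    (S Sinv : H →L[ℂ] H)
    (hS : ∀ x : H, HasSum (fun i => ContinuousLinearMap.adjoint (T i) (T i x)) (S x))
    (hSinv₁ : S.comp Sinv = 1) (hSinv₂ : Sinv.comp S = 1) :
    ∀ x : H,
      HasSum
        (fun i =>
          ContinuousLinearMap.adjoint ((T i).comp Sinv) ((T i).comp Sinv x))
        (Sinv x) :=
  dual_frame_operator_eq_inv_general G T S Sinv hS hSinv₁
end

section
/- Let H be a complex Hilbert space, (Hᵢ)_{i∈ℕ} a sequence of complex Hilbert spaces, and (Tᵢ : H → Hᵢ)_{i∈ℕ} a frame of operators for H with bounds r₁, r₂, with frame operator S. Let R : H → H be a bounded self-adjoint operator such that R ∘ S ∘ R = I (for instance R = S^{-1/2}, the positive square root of S⁻¹). Then the operators Tᵢ ∘ R form a Parseval frame of operators for H: Σ_{i∈ℕ} ‖(Tᵢ ∘ R)(x)‖² = ‖x‖² for all x ∈ H. -/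
/- With `y = R x`, pairing `S y = Σᵢ Tᵢ† (Tᵢ y)` against `y` gives `Σᵢ ‖Tᵢ y‖² = ⟪S y, y⟫`, and
self-adjointness of `R` turns the right side into `⟪R (S (R x)), x⟫ = ‖x‖²`. -/

open ContinuousLinearMap RCLike

theorem hasSum_norm_sq_of_hasSum_adjoint_apply_s9 {𝕜 ι E : Type*} [RCLike 𝕜]
    [NormedAddCommGroup E] [InnerProductSpace 𝕜 E] [CompleteSpace E]
    {G : ι → Type*} [∀ i, NormedAddCommGroup (G i)] [∀ i, InnerProductSpace 𝕜 (G i)]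
    [∀ i, CompleteSpace (G i)] (T : ∀ i, E →L[𝕜] G i) {y s : E}
    (h : HasSum (fun i => adjoint (T i) (T i y)) s) :
    HasSum (fun i => ‖T i y‖ ^ 2) (re (inner 𝕜 s y)) := by
  have hinner := ((innerSL 𝕜).flip y).hasSum h
  simpa only [reCLM_apply, flip_apply, innerSL_apply_apply, adjoint_inner_left,
    inner_self_eq_norm_sq]
    using reCLM.hasSum hinner

theorem re_inner_apply_self_eq_norm_sq_of_conj_eq {𝕜 E : Type*} [RCLike 𝕜]
    [NormedAddCommGroup E] [InnerProductSpace 𝕜 E] [CompleteSpace E]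
    {R S : E →L[𝕜] E} (hR : IsSelfAdjoint R) {x : E} (hx : R (S (R x)) = x) :
    re (inner 𝕜 (S (R x)) (R x)) = ‖x‖ ^ 2 := by
  have hmove : inner 𝕜 (S (R x)) (R x) = inner 𝕜 (R (S (R x))) x := by
    simpa only [hR.adjoint_eq] using adjoint_inner_right R (S (R x)) x
  rw [hmove, hx, inner_self_eq_norm_sq]

theorem parseval_frame_of_operators_general
    {H : Type*} [NormedAddCommGroup H] [InnerProductSpace ℂ H] [CompleteSpace H]
    (G : ℕ → Type*) [∀ i, NormedAddCommGroup (G i)] [∀ i, InnerProductSpace ℂ (G i)]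
    [∀ i, CompleteSpace (G i)]
    (T : ∀ i, H →L[ℂ] G i)
    (S : H →L[ℂ] H)
    (hS : ∀ x : H, HasSum (fun i => ContinuousLinearMap.adjoint (T i) (T i x)) (S x))
    (R : H →L[ℂ] H) (hR : IsSelfAdjoint R) (hRSR : ∀ x : H, R (S (R x)) = x) :
    ∀ x : H, HasSum (fun i => ‖(T i).comp R x‖ ^ 2) (‖x‖ ^ 2) := by
  intro x
  rw [← re_inner_apply_self_eq_norm_sq_of_conj_eq hR (hRSR x)]
  exact hasSum_norm_sq_of_hasSum_adjoint_apply_s9 T (hS (R x))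

/-- If `(Tᵢ)` is a frame of operators with frame operator `S`, and `R` is a bounded self-adjoint
operator with `R ∘ S ∘ R = I` (e.g. `R = S^{-1/2}`), then `(Tᵢ ∘ R)` is a Parseval frame of
operators: `Σᵢ ‖Tᵢ(R x)‖² = ‖x‖²` for all `x`. -/
theorem parseval_frame_of_operators
    {H : Type*} [NormedAddCommGroup H] [InnerProductSpace ℂ H] [CompleteSpace H]
    (G : ℕ → Type*) [∀ i, NormedAddCommGroup (G i)] [∀ i, InnerProductSpace ℂ (G i)]
    [∀ i, CompleteSpace (G i)]
    (T : ∀ i, H →L[ℂ] G i)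
    (r₁ r₂ : ℝ) (hr₁ : 0 < r₁) (hr₁₂ : r₁ ≤ r₂)
    (hframe : ∀ x : H,
        r₁ * ‖x‖ ^ 2 ≤ ∑' i, ‖T i x‖ ^ 2 ∧ ∑' i, ‖T i x‖ ^ 2 ≤ r₂ * ‖x‖ ^ 2)
    (S : H →L[ℂ] H)
    (hS : ∀ x : H, HasSum (fun i => ContinuousLinearMap.adjoint (T i) (T i x)) (S x))
    (R : H →L[ℂ] H) (hR : IsSelfAdjoint R) (hRSR : ∀ x : H, R (S (R x)) = x) :
    ∀ x : H, HasSum (fun i => ‖(T i).comp R x‖ ^ 2) (‖x‖ ^ 2) :=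
  parseval_frame_of_operators_general G T S hS R hR hRSR
end

section
/- Let H be a complex Hilbert space, (Hᵢ)_{i∈ℕ} a sequence of complex Hilbert spaces, and (Tᵢ : H → Hᵢ)_{i∈ℕ} a sequence of bounded linear operators. Suppose there exist constants 0 < r₁ ≤ r₂ < ∞ and a dense subset V of H such that r₁‖x‖² ≤ Σ_{i∈ℕ} ‖Tᵢ x‖² ≤ r₂‖x‖² for all x ∈ V. Then (Tᵢ) is a frame of operators for H with bounds r₁ and r₂, i.e. the inequalities hold for every x ∈ H. -/
/-! On `V` the lower bound forces `∑ ‖Tᵢ x‖²` to converge, so every partial sum is at most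
`r₂ ‖x‖²` on `V`, hence on all of `H` since partial sums are continuous. This gives the upper
bound and makes `x ↦ (Tᵢ x)ᵢ` a bounded operator into `ℓ²`, so `x ↦ ∑ ‖Tᵢ x‖²`, the squared norm
of that operator's value, is continuous and the lower bound extends from `V` as well. -/

theorem summable_of_tsum_ne_zero {ι α : Type*} [AddCommMonoid α] [TopologicalSpace α]
    {f : ι → α} (h : ∑' i, f i ≠ 0) : Summable f := by
  by_contra hf
  exact h (tsum_eq_zero_of_not_summable hf)

theorem Dense.forall_le_of_continuous {X α : Type*} [TopologicalSpace X] [TopologicalSpace α]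
    [Preorder α] [OrderClosedTopology α] {V : Set X} (hV : Dense V) {f g : X → α}
    (hf : Continuous f) (hg : Continuous g) (h : ∀ x ∈ V, f x ≤ g x) (x : X) :
    f x ≤ g x :=
  closure_minimal h (isClosed_le hf hg) (hV x)

theorem lp.norm_sq_eq_tsum {ι : Type*} {E : ι → Type*} [∀ i, NormedAddCommGroup (E i)]
    (f : lp E 2) : ‖f‖ ^ 2 = ∑' i, ‖f i‖ ^ 2 := by
  simpa using lp.norm_rpow_eq_tsum (p := 2) (by norm_num) f

section AnalysisOperator

variable {𝕜 E ι : Type*} [RCLike 𝕜] [NormedAddCommGroup E] [NormedSpace 𝕜 E]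
  {G : ι → Type*} [∀ i, NormedAddCommGroup (G i)] [∀ i, NormedSpace 𝕜 (G i)]
  (T : ∀ i, E →L[𝕜] G i) (C : ℝ)
  (hT : ∀ (s : Finset ι) (x : E), ∑ i ∈ s, ‖T i x‖ ^ 2 ≤ C * ‖x‖ ^ 2)

noncomputable def analysisLinearMap : E →ₗ[𝕜] lp G 2 where
  toFun x := ⟨fun i => T i x, memℓp_gen' (p := 2) (by simpa using hT · x)⟩
  map_add' x y := Subtype.ext <| funext fun i => map_add (T i) x y
  map_smul' c x := Subtype.ext <| funext fun i => map_smul (T i) c x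

theorem norm_analysisLinearMap_apply_sq (x : E) :
    ‖analysisLinearMap T C hT x‖ ^ 2 = ∑' i, ‖T i x‖ ^ 2 :=
  lp.norm_sq_eq_tsum _

theorem norm_analysisLinearMap_apply_le (x : E) :
    ‖analysisLinearMap T C hT x‖ ≤ Real.sqrt C * ‖x‖ := by
  have hsq : ‖analysisLinearMap T C hT x‖ ^ 2 ≤ C * ‖x‖ ^ 2 := by
    rw [norm_analysisLinearMap_apply_sq]
    exact Real.tsum_le_of_sum_le (fun i => by positivity) (hT · x)
  simpa [Real.sqrt_mul' C (sq_nonneg ‖x‖)] using Real.abs_le_sqrt hsq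

theorem continuous_tsum_sq_norm_of_sum_le (T : ∀ i, E →L[𝕜] G i) (C : ℝ)
    (hT : ∀ (s : Finset ι) (x : E), ∑ i ∈ s, ‖T i x‖ ^ 2 ≤ C * ‖x‖ ^ 2) :
    Continuous fun x => ∑' i, ‖T i x‖ ^ 2 := by
  have hcont := ((analysisLinearMap T C hT).mkContinuous _
    (norm_analysisLinearMap_apply_le T C hT)).continuous
  exact (hcont.norm.pow 2).congr (norm_analysisLinearMap_apply_sq T C hT)

end AnalysisOperator

theorem frame_of_operators_of_dense_general
    {H : Type*} [NormedAddCommGroup H] [InnerProductSpace ℂ H]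
    (G : ℕ → Type*) [∀ i, NormedAddCommGroup (G i)] [∀ i, InnerProductSpace ℂ (G i)]
    (T : ∀ i, H →L[ℂ] G i)
    (r₁ r₂ : ℝ) (hr₁ : 0 < r₁)
    (V : Set H) (hV : Dense V)
    (hframe : ∀ x ∈ V,
        r₁ * ‖x‖ ^ 2 ≤ ∑' i, ‖T i x‖ ^ 2 ∧ ∑' i, ‖T i x‖ ^ 2 ≤ r₂ * ‖x‖ ^ 2) :
    ∀ x : H,
      r₁ * ‖x‖ ^ 2 ≤ ∑' i, ‖T i x‖ ^ 2 ∧ ∑' i, ‖T i x‖ ^ 2 ≤ r₂ * ‖x‖ ^ 2 := by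
  have hpartial_on_V : ∀ x ∈ V, ∀ s : Finset ℕ, ∑ i ∈ s, ‖T i x‖ ^ 2 ≤ r₂ * ‖x‖ ^ 2 := by
    intro x hx s
    rcases eq_or_ne x 0 with rfl | hx0
    · simp
    -- the lower frame bound rules out the junk value `0` of a divergent `tsum`
    have hpos : 0 < ∑' i, ‖T i x‖ ^ 2 := by
      have : 0 < r₁ * ‖x‖ ^ 2 := by positivity
      exact this.trans_le (hframe x hx).1
    exact ((summable_of_tsum_ne_zero hpos.ne').sum_le_tsum s fun i _ => by positivity).trans
      (hframe x hx).2
  have hpartial : ∀ (s : Finset ℕ) (x : H), ∑ i ∈ s, ‖T i x‖ ^ 2 ≤ r₂ * ‖x‖ ^ 2 := fun s =>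
    hV.forall_le_of_continuous (by fun_prop) (by fun_prop) fun x hx => hpartial_on_V x hx s
  intro x
  exact ⟨hV.forall_le_of_continuous (by fun_prop) (continuous_tsum_sq_norm_of_sum_le T r₂ hpartial)
      (fun y hy => (hframe y hy).1) x,
    Real.tsum_le_of_sum_le (fun i => by positivity) (hpartial · x)⟩

/-- If the frame inequalities hold on a dense subset `V` of `H`, then `(Tᵢ)` is a frame of
operators for all of `H` with the same bounds. -/
theorem frame_of_operators_of_dense
    {H : Type*} [NormedAddCommGroup H] [InnerProductSpace ℂ H] [CompleteSpace H]
    (G : ℕ → Type*) [∀ i, NormedAddCommGroup (G i)] [∀ i, InnerProductSpace ℂ (G i)]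
    [∀ i, CompleteSpace (G i)]
    (T : ∀ i, H →L[ℂ] G i)
    (r₁ r₂ : ℝ) (hr₁ : 0 < r₁) (hr₁₂ : r₁ ≤ r₂)
    (V : Set H) (hV : Dense V)
    (hframe : ∀ x ∈ V,
        r₁ * ‖x‖ ^ 2 ≤ ∑' i, ‖T i x‖ ^ 2 ∧ ∑' i, ‖T i x‖ ^ 2 ≤ r₂ * ‖x‖ ^ 2) :
    ∀ x : H,
      r₁ * ‖x‖ ^ 2 ≤ ∑' i, ‖T i x‖ ^ 2 ∧ ∑' i, ‖T i x‖ ^ 2 ≤ r₂ * ‖x‖ ^ 2 :=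
  frame_of_operators_of_dense_general G T r₁ r₂ hr₁ V hV hframe
end

section
/- Let H be a complex Hilbert space, (Hᵢ)_{i∈ℕ} a sequence of complex Hilbert spaces, (Tᵢ : H → Hᵢ)_{i∈ℕ} a frame of operators for H with bounds r₁, r₂, and (Rᵢ : H → Hᵢ)_{i∈ℕ} a sequence of bounded linear operators such that Σ_{i∈ℕ} ‖Rᵢ x‖² < ∞ for every x ∈ H. Suppose there exist constants λ₁, λ₂, μ ≥ 0 with λ₂ < 1 and λ₁ + λ₂ + μ/√r₁ < 1 such that for all x ∈ H, (Σ_{i∈ℕ} ‖(Tᵢ − Rᵢ)x‖²)^{1/2} ≤ λ₁(Σ_{i∈ℕ} ‖Tᵢ x‖²)^{1/2} + λ₂(Σ_{i∈ℕ} ‖Rᵢ x‖²)^{1/2} + μ‖x‖. Then (Rᵢ) is a frame of operators for H with bounds r₁(1 − (λ₁ + λ₂ + μ/√r₁)/(1 + λ₂))² and r₂(1 + (λ₁ + λ₂ + μ/√r₁)/(1 − λ₂))². -/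
/-!
Fix `x` and put `a = ‖(Tᵢ x)‖`, `b = ‖(Rᵢ x)‖` (norms in `ℓ²`). The reverse triangle inequality
in `ℓ²` bounds `|a - b|` by `‖((Tᵢ - Rᵢ) x)‖`, and the lower frame bound gives
`μ ‖x‖ ≤ (μ / √r₁) a`, so the hypothesis becomes `|a - b| ≤ (λ₁ + μ / √r₁) a + λ₂ b`.
This pins `b` between two multiples of `a`; squaring and the frame bounds of `T` finish.
-/

section SquareSummable

variable {ι : Type*} {E : ι → Type*} [∀ i, NormedAddCommGroup (E i)]

theorem memℓp_two_iff_summable_sq {f : ∀ i, E i} :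
    Memℓp f 2 ↔ Summable fun i => ‖f i‖ ^ 2 := by
  simpa using memℓp_gen_iff (p := 2) (f := f) (by norm_num)

theorem lp.norm_two_eq_sqrt_tsum (f : lp E 2) : ‖f‖ = √(∑' i, ‖f i‖ ^ 2) := by
  have h := lp.norm_rpow_eq_tsum (p := 2) (by norm_num) f
  simp only [ENNReal.toReal_ofNat, Real.rpow_two] at h
  rw [← h, Real.sqrt_sq (norm_nonneg f)]

theorem abs_sqrt_tsum_norm_sq_sub_le {f g : ∀ i, E i} (hf : Summable fun i => ‖f i‖ ^ 2)
    (hg : Summable fun i => ‖g i‖ ^ 2) :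
    |√(∑' i, ‖f i‖ ^ 2) - √(∑' i, ‖g i‖ ^ 2)| ≤ √(∑' i, ‖f i - g i‖ ^ 2) := by
  let F : lp E 2 := ⟨f, memℓp_two_iff_summable_sq.2 hf⟩
  let G : lp E 2 := ⟨g, memℓp_two_iff_summable_sq.2 hg⟩
  simpa only [lp.norm_two_eq_sqrt_tsum, lp.coeFn_sub, Pi.sub_apply] using abs_norm_sub_norm_le F G

end SquareSummable

theorem one_sub_div_mul_le_of_abs_sub_le {a b k l : ℝ} (hl : -1 < l)
    (h : |a - b| ≤ k * a + l * b) : (1 - (k + l) / (1 + l)) * a ≤ b := by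
  have hl' : 0 < 1 + l := by linarith
  rw [one_sub_div hl'.ne', div_mul_eq_mul_div, div_le_iff₀ hl']
  linarith [le_abs_self (a - b)]

theorem le_one_add_div_mul_of_abs_sub_le {a b k l : ℝ} (hl : l < 1)
    (h : |a - b| ≤ k * a + l * b) : b ≤ (1 + (k + l) / (1 - l)) * a := by
  have hl' : 0 < 1 - l := by linarith
  rw [one_add_div hl'.ne', div_mul_eq_mul_div, le_div_iff₀ hl']
  linarith [neg_abs_le (a - b)]

theorem summable_norm_sq_of_lower_bound {𝕜 E ι : Type*} {F : ι → Type*}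
    [NontriviallyNormedField 𝕜] [NormedAddCommGroup E] [NormedSpace 𝕜 E]
    [∀ i, NormedAddCommGroup (F i)] [∀ i, NormedSpace 𝕜 (F i)]
    {T : ∀ i, E →L[𝕜] F i} {r : ℝ} (hr : 0 < r) {x : E}
    (hx : r * ‖x‖ ^ 2 ≤ ∑' i, ‖T i x‖ ^ 2) : Summable fun i => ‖T i x‖ ^ 2 := by
  rcases eq_or_ne x 0 with rfl | hx0
  · simp
  by_contra hT
  rw [tsum_eq_zero_of_not_summable hT] at hx
  have : 0 < r * ‖x‖ ^ 2 := by positivity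
  linarith

theorem mul_sq_le_and_le_mul_sq_of_sqrt_bounds {A B L K m r r' : ℝ} (hA : 0 ≤ A) (hB : 0 ≤ B)
    (hL : 0 ≤ L) (hrA : r * m ≤ A) (hAr : A ≤ r' * m) (hlow : L * √A ≤ √B)
    (hup : √B ≤ K * √A) : r * L ^ 2 * m ≤ B ∧ B ≤ r' * K ^ 2 * m := by
  have hLA : L ^ 2 * A ≤ B := by
    simpa only [mul_pow, Real.sq_sqrt hA, Real.sq_sqrt hB] using
      pow_le_pow_left₀ (by positivity) hlow 2
  have hKA : B ≤ K ^ 2 * A := by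
    simpa only [mul_pow, Real.sq_sqrt hA, Real.sq_sqrt hB] using
      pow_le_pow_left₀ (Real.sqrt_nonneg B) hup 2
  constructor <;> nlinarith [sq_nonneg L, sq_nonneg K]

theorem stability_of_frame_of_operators_general
    {H : Type*} [NormedAddCommGroup H] [InnerProductSpace ℂ H]
    (G : ℕ → Type*) [∀ i, NormedAddCommGroup (G i)] [∀ i, InnerProductSpace ℂ (G i)]
    (T R : ∀ i, H →L[ℂ] G i)
    (r₁ r₂ : ℝ) (hr₁ : 0 < r₁)
    (hframe : ∀ x : H,
        r₁ * ‖x‖ ^ 2 ≤ ∑' i, ‖T i x‖ ^ 2 ∧ ∑' i, ‖T i x‖ ^ 2 ≤ r₂ * ‖x‖ ^ 2)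
    (hRsummable : ∀ x : H, Summable fun i => ‖R i x‖ ^ 2)
    (l₁ l₂ μ : ℝ) (hl₂ : 0 ≤ l₂) (hμ : 0 ≤ μ)
    (hl₂lt : l₂ < 1) (hsmall : l₁ + l₂ + μ / Real.sqrt r₁ < 1)
    (hpert : ∀ x : H,
        Real.sqrt (∑' i, ‖(T i - R i) x‖ ^ 2) ≤
          l₁ * Real.sqrt (∑' i, ‖T i x‖ ^ 2) + l₂ * Real.sqrt (∑' i, ‖R i x‖ ^ 2) +
            μ * ‖x‖) :
    ∀ x : H,
      r₁ * (1 - (l₁ + l₂ + μ / Real.sqrt r₁) / (1 + l₂)) ^ 2 * ‖x‖ ^ 2 ≤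
          ∑' i, ‖R i x‖ ^ 2 ∧
        ∑' i, ‖R i x‖ ^ 2 ≤
          r₂ * (1 + (l₁ + l₂ + μ / Real.sqrt r₁) / (1 - l₂)) ^ 2 * ‖x‖ ^ 2 := by
  intro x
  set a := √(∑' i, ‖T i x‖ ^ 2)
  set b := √(∑' i, ‖R i x‖ ^ 2)
  have hxa : √r₁ * ‖x‖ ≤ a := by
    rw [← Real.sqrt_sq (norm_nonneg x), ← Real.sqrt_mul hr₁.le]
    exact Real.sqrt_le_sqrt (hframe x).1
  have hab : |a - b| ≤ (l₁ + μ / √r₁) * a + l₂ * b := calc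
    |a - b| ≤ √(∑' i, ‖(T i - R i) x‖ ^ 2) :=
      abs_sqrt_tsum_norm_sq_sub_le
        (summable_norm_sq_of_lower_bound hr₁ (hframe x).1) (hRsummable x)
    _ ≤ l₁ * a + l₂ * b + μ / √r₁ * (√r₁ * ‖x‖) := by
      rw [← mul_assoc, div_mul_cancel₀ μ (Real.sqrt_pos.2 hr₁).ne']
      exact hpert x
    _ ≤ (l₁ + μ / √r₁) * a + l₂ * b := by
      have : μ / √r₁ * (√r₁ * ‖x‖) ≤ μ / √r₁ * a := by gcongr
      linarith
  have hlow := one_sub_div_mul_le_of_abs_sub_le (by linarith) hab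
  have hup := le_one_add_div_mul_of_abs_sub_le hl₂lt hab
  rw [add_right_comm] at hlow hup
  have hL : 0 ≤ 1 - (l₁ + l₂ + μ / √r₁) / (1 + l₂) := by
    rw [sub_nonneg, div_le_one (by linarith)]
    linarith
  exact mul_sq_le_and_le_mul_sq_of_sqrt_bounds (tsum_nonneg fun i => sq_nonneg ‖T i x‖)
    (tsum_nonneg fun i => sq_nonneg ‖R i x‖) hL (hframe x).1 (hframe x).2 hlow hup

/-- Stability of frames of operators: a perturbation `(Rᵢ)` of a frame of operators `(Tᵢ)`
satisfying the Paley–Wiener type condition is again a frame of operators, with the indicated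
bounds. -/
theorem stability_of_frame_of_operators
    {H : Type*} [NormedAddCommGroup H] [InnerProductSpace ℂ H] [CompleteSpace H]
    (G : ℕ → Type*) [∀ i, NormedAddCommGroup (G i)] [∀ i, InnerProductSpace ℂ (G i)]
    [∀ i, CompleteSpace (G i)]
    (T R : ∀ i, H →L[ℂ] G i)
    (r₁ r₂ : ℝ) (hr₁ : 0 < r₁) (hr₁₂ : r₁ ≤ r₂)
    (hframe : ∀ x : H,
        r₁ * ‖x‖ ^ 2 ≤ ∑' i, ‖T i x‖ ^ 2 ∧ ∑' i, ‖T i x‖ ^ 2 ≤ r₂ * ‖x‖ ^ 2)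
    (hRsummable : ∀ x : H, Summable fun i => ‖R i x‖ ^ 2)
    (l₁ l₂ μ : ℝ) (hl₁ : 0 ≤ l₁) (hl₂ : 0 ≤ l₂) (hμ : 0 ≤ μ)
    (hl₂lt : l₂ < 1) (hsmall : l₁ + l₂ + μ / Real.sqrt r₁ < 1)
    (hpert : ∀ x : H,
        Real.sqrt (∑' i, ‖(T i - R i) x‖ ^ 2) ≤
          l₁ * Real.sqrt (∑' i, ‖T i x‖ ^ 2) + l₂ * Real.sqrt (∑' i, ‖R i x‖ ^ 2) +
            μ * ‖x‖) :
    ∀ x : H,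
      r₁ * (1 - (l₁ + l₂ + μ / Real.sqrt r₁) / (1 + l₂)) ^ 2 * ‖x‖ ^ 2 ≤
          ∑' i, ‖R i x‖ ^ 2 ∧
        ∑' i, ‖R i x‖ ^ 2 ≤
          r₂ * (1 + (l₁ + l₂ + μ / Real.sqrt r₁) / (1 - l₂)) ^ 2 * ‖x‖ ^ 2 :=
  stability_of_frame_of_operators_general G T R r₁ r₂ hr₁ hframe hRsummable l₁ l₂ μ hl₂ hμ hl₂lt
    hsmall hpert
end
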